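/- In the exterior algebra over ℝ⁶ with basis e¹,…,e⁶, let Ω = c₁ e¹∧e² + c₂ e³∧e⁴ + c₃ e⁵∧e⁶ + c₄ e³∧e⁶ + c₅ e⁴∧e⁵. The linear map from span{e¹∧e², e³∧e⁴, e⁵∧e⁶, e³∧e⁶, e⁴∧e⁵} to 4-forms given by wedging with Ω is injective if and only if c₁(c₂c₃ + c₄c₅) ≠ 0. -/

import Mathlib

open ExteriorAlgebra

/-- The basis 1-forms `e i` (e¹ = e 0, …, e⁶ = e 5) of the exterior algebra over ℝ⁶. -/
noncomputable def e (i : Fin 6) : ExteriorAlgebra ℝ (Fin 6 → ℝ) :=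
  ExteriorAlgebra.ι ℝ (Pi.single i 1)

/-!
The five 2-forms `wⱼ` spanning the domain and the five 4-forms `uᵢ` occurring in the products
`Ω ∧ wⱼ` are distinct members of the standard basis of `⋀ ℝ⁶`, so both families are linearly
independent. Writing `Ω ∧ wⱼ = ∑ᵢ Mᵢⱼ uᵢ`, the map is injective exactly when
`det M = -2 c₁³ (c₂c₃ + c₄c₅)` is nonzero.
-/

open Matrix

theorem ExteriorAlgebra.ιMulti_comp_eq_basis {R M I : Type*} [CommRing R] [AddCommGroup M]
    [Module R M] [LinearOrder I] (b : Module.Basis I R M) {n : ℕ} {f : Fin n → I}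
    (hf : StrictMono f) :
    ιMulti R n (b ∘ f) = b.ExteriorAlgebra (Finset.univ.image f) := by
  open Set.powersetCard in
  have himage : Finset.univ.image f = ofFinEmbEquiv (OrderEmbedding.ofStrictMono f hf) := by
    ext i
    rw [mem_coe_iff, mem_ofFinEmbEquiv_iff_mem_range]
    simp
  rw [himage, basis_apply_powersetCard, ιMulti_family, Equiv.symm_apply_apply]
  rfl

theorem LinearMap.injective_restrict_span_iff_det_ne_zero {ι K V W : Type*} [Fintype ι]
    [DecidableEq ι] [Field K] [AddCommGroup V] [Module K V] [AddCommGroup W] [Module K W]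
    (f : V →ₗ[K] W) {w : ι → V} {u : ι → W} (hw : LinearIndependent K w)
    (hu : LinearIndependent K u) (M : Matrix ι ι K) (hf : ∀ j, f (w j) = ∑ i, M i j • u i) :
    Function.Injective (fun x : Submodule.span K (Set.range w) => f x) ↔ M.det ≠ 0 := by
  let coords := (Module.Basis.span hw).equivFun.symm
  have hcomp : (fun x : Submodule.span K (Set.range w) => f x) ∘ coords =
      Fintype.linearCombination K u ∘ (M *ᵥ ·) := by
    ext t
    simp only [Function.comp_apply, coords, Module.Basis.equivFun_symm_apply, Submodule.coe_sum,
      Submodule.coe_smul, Module.Basis.span_apply, map_sum, map_smul, hf, Finset.smul_sum,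
      smul_smul, Fintype.linearCombination_apply, mulVec, dotProduct, Finset.sum_smul]
    rw [Finset.sum_comm]
    simp only [mul_comm]
  rw [← EquivLike.injective_comp coords, hcomp,
    hu.fintypeLinearCombination_injective.of_comp_iff, mulVec_injective_iff_isUnit,
    Matrix.isUnit_iff_isUnit_det, isUnit_iff_ne_zero]

lemma e_mul_self (i : Fin 6) : e i * e i = 0 := ι_sq_zero _

lemma e_mul_e_mul_self (i : Fin 6) (x : ExteriorAlgebra ℝ (Fin 6 → ℝ)) :
    e i * (e i * x) = 0 := by
  rw [← mul_assoc, e_mul_self, zero_mul]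

lemma e_mul_e_anticomm (i j : Fin 6) : e i * e j = -(e j * e i) :=
  eq_neg_of_add_eq_zero_left (ι_add_mul_swap _ _)

lemma e_mul_e_mul_anticomm (i j : Fin 6) (x : ExteriorAlgebra ℝ (Fin 6 → ℝ)) :
    e i * (e j * x) = -(e j * (e i * x)) := by
  rw [← mul_assoc, e_mul_e_anticomm, neg_mul, mul_assoc]

lemma e_mul_e_eq_basis {i j : Fin 6} (h : i < j) :
    e i * e j = (Pi.basisFun ℝ (Fin 6)).ExteriorAlgebra {i, j} := by
  have := ιMulti_comp_eq_basis (Pi.basisFun ℝ (Fin 6)) (f := ![i, j])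
    (by simp [Fin.strictMono_iff_lt_succ, h])
  simpa [ιMulti_apply, List.ofFn_succ, e, vecTail, Finset.image_insert, Fin.univ_succ] using this

lemma e_mul_e_mul_e_mul_e_eq_basis {i j k l : Fin 6} (hij : i < j) (hjk : j < k) (hkl : k < l) :
    e i * (e j * (e k * e l)) = (Pi.basisFun ℝ (Fin 6)).ExteriorAlgebra {i, j, k, l} := by
  have := ιMulti_comp_eq_basis (Pi.basisFun ℝ (Fin 6)) (f := ![i, j, k, l])
    (by simp [Fin.strictMono_iff_lt_succ, Fin.forall_fin_succ, hij, hjk, hkl])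
  simpa [ιMulti_apply, List.ofFn_succ, e, vecTail, Finset.image_insert, Fin.univ_succ] using this

noncomputable def twoForms : Fin 5 → ExteriorAlgebra ℝ (Fin 6 → ℝ) :=
  ![e 0 * e 1, e 2 * e 3, e 4 * e 5, e 2 * e 5, e 3 * e 4]

noncomputable def fourForms : Fin 5 → ExteriorAlgebra ℝ (Fin 6 → ℝ) :=
  ![e 0 * (e 1 * (e 2 * e 3)), e 0 * (e 1 * (e 4 * e 5)), e 0 * (e 1 * (e 2 * e 5)),
    e 0 * (e 1 * (e 3 * e 4)), e 2 * (e 3 * (e 4 * e 5))]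

lemma linearIndependent_twoForms : LinearIndependent ℝ twoForms := by
  have : twoForms = (Pi.basisFun ℝ (Fin 6)).ExteriorAlgebra ∘
      ![{0, 1}, {2, 3}, {4, 5}, {2, 5}, {3, 4}] := by
    funext j
    fin_cases j <;> simp [twoForms, e_mul_e_eq_basis]
  rw [this]
  exact (Module.Basis.linearIndependent _).comp _ (by decide)

lemma linearIndependent_fourForms : LinearIndependent ℝ fourForms := by
  have : fourForms = (Pi.basisFun ℝ (Fin 6)).ExteriorAlgebra ∘
      ![{0, 1, 2, 3}, {0, 1, 4, 5}, {0, 1, 2, 5}, {0, 1, 3, 4}, {2, 3, 4, 5}] := by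
    funext j
    fin_cases j <;> simp [fourForms, e_mul_e_mul_e_mul_e_eq_basis]
  rw [this]
  exact (Module.Basis.linearIndependent _).comp _ (by decide)

lemma range_twoForms :
    Set.range twoForms = {e 0 * e 1, e 2 * e 3, e 4 * e 5, e 2 * e 5, e 3 * e 4} := by
  simp only [twoForms, range_cons, range_empty, Set.union_empty, Set.singleton_union]

def coeffMatrix (c₁ c₂ c₃ c₄ c₅ : ℝ) : Matrix (Fin 5) (Fin 5) ℝ :=
  !![c₂, c₁, 0, 0, 0;
     c₃, 0, c₁, 0, 0;
     c₄, 0, 0, c₁, 0;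
     c₅, 0, 0, 0, c₁;
     0, c₃, c₂, c₅, c₄]

lemma det_coeffMatrix (c₁ c₂ c₃ c₄ c₅ : ℝ) :
    (coeffMatrix c₁ c₂ c₃ c₄ c₅).det = -2 * c₁ ^ 3 * (c₂ * c₃ + c₄ * c₅) := by
  simp [coeffMatrix, det_succ_row_zero, Fin.sum_univ_succ, Fin.succAbove]
  ring

lemma mul_twoForms (c₁ c₂ c₃ c₄ c₅ : ℝ) (j : Fin 5) :
    (c₁ • (e 0 * e 1) + c₂ • (e 2 * e 3) + c₃ • (e 4 * e 5)
      + c₄ • (e 2 * e 5) + c₅ • (e 3 * e 4)) * twoForms j =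
      ∑ i, coeffMatrix c₁ c₂ c₃ c₄ c₅ i j • fourForms i := by
  -- the guard `j < i` makes `simp` sort every product of 1-forms by increasing index
  have swap (i j : Fin 6) (_ : j < i) := e_mul_e_anticomm i j
  have swap_mul (i j : Fin 6) (_ : j < i) := e_mul_e_mul_anticomm i j
  fin_cases j <;>
    simp [twoForms, fourForms, coeffMatrix, Fin.sum_univ_five, add_mul, mul_assoc,
      e_mul_self, e_mul_e_mul_self, swap, swap_mul]

/-- for Ω = c₁ e¹∧e² + c₂ e³∧e⁴ + c₃ e⁵∧e⁶ + c₄ e³∧e⁶ + c₅ e⁴∧e⁵,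
the linear map x ↦ Ω∧x from span{e¹∧e², e³∧e⁴, e⁵∧e⁶, e³∧e⁶, e⁴∧e⁵} to the
4-forms is injective iff c₁(c₂c₃ + c₄c₅) ≠ 0. -/
theorem stmt6 (c₁ c₂ c₃ c₄ c₅ : ℝ) :
    Function.Injective
      (fun x : Submodule.span ℝ
          ({e 0 * e 1, e 2 * e 3, e 4 * e 5, e 2 * e 5, e 3 * e 4} :
            Set (ExteriorAlgebra ℝ (Fin 6 → ℝ))) =>
        (c₁ • (e 0 * e 1) + c₂ • (e 2 * e 3) + c₃ • (e 4 * e 5)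
          + c₄ • (e 2 * e 5) + c₅ • (e 3 * e 4)) * (x : ExteriorAlgebra ℝ (Fin 6 → ℝ)))
      ↔ c₁ * (c₂ * c₃ + c₄ * c₅) ≠ 0 := by
  rw [← range_twoForms]
  refine ((LinearMap.mulLeft ℝ _).injective_restrict_span_iff_det_ne_zero
    linearIndependent_twoForms linearIndependent_fourForms _ (mul_twoForms c₁ c₂ c₃ c₄ c₅)).trans ?_
  rw [det_coeffMatrix]
  simp
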